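/- Let α ∈ [0, 1] and let g be real with 0 < g < 1/(4(1+α)). Then for every n ≥ 1 and every w : ℕ → ℝ, the quadratic form inequality ∑_{r=1}^n ∑_{s=1}^n (r·s)^{−1/2}·(1/2)·r·C(r+s−1, r)·((1+α)^r + (1−α)^r)^{1/2}·((1+α)^s + (1−α)^s)^{1/2}·(√g)^{r+s}·w_r·w_s ≤ ∑_{s=1}^n w_s² holds. In operator terms: the largest eigenvalue λ₁^{di}(g, α) of the symmetrised dilute transfer operator D^{1/2} K^{di}(g,α) D^{1/2} satisfies λ₁^{di}(g, α) ≤ 1 for all g ∈ (0, 1/(4(1+α))). -/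

import Mathlib

/-!
Schur test with the weight `p r = r^{-1/2}`. The kernel is symmetric since
`r · C(r+s-1, r) = s · C(r+s-1, s)`, and since `(1+α)^r + (1-α)^r ≤ 2 (1+α)^r`, its column sum
against `p` is at most `p s` times `∑_r C(r+s-1, r) x^(r+s) ≤ (x / (1 - x))^s ≤ 1`, a partial sum
of the negative binomial series in `x = √((1+α) g) ≤ 1/2`.
-/

theorem Nat.mul_choose_add_sub_one_comm (r s : ℕ) :
    r * (r + s - 1).choose r = s * (r + s - 1).choose s := by
  rcases r with _ | a
  · rcases s with _ | b <;> simp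
  rcases s with _ | b
  · simp
  rw [show a + 1 + (b + 1) - 1 = a + b + 1 by omega, mul_comm, mul_comm (b + 1),
    ← Nat.add_one_mul_choose_eq, ← Nat.add_one_mul_choose_eq, Nat.choose_symm_add]

theorem Real.sqrt_pow_add_pow_le {a b : ℝ} (hab : |b| ≤ a) (r : ℕ) :
    √(a ^ r + b ^ r) ≤ √2 * √a ^ r := by
  have ha : 0 ≤ a := (abs_nonneg b).trans hab
  have hbr : b ^ r ≤ a ^ r :=
    (le_abs_self _).trans ((abs_pow b r).trans_le (pow_le_pow_left₀ (abs_nonneg b) hab r))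
  rw [Real.sqrt_le_left (by positivity), mul_pow, ← pow_mul, mul_comm r 2, pow_mul,
    Real.sq_sqrt zero_le_two, Real.sq_sqrt ha]
  linarith

theorem sum_choose_mul_pow_le_one {x : ℝ} (hx0 : 0 ≤ x) (hx : x ≤ 1 / 2) (k : ℕ)
    (s : Finset ℕ) : ∑ r ∈ s, ((r + k).choose k : ℝ) * x ^ (r + k + 1) ≤ 1 := by
  have hx1 : ‖x‖ < 1 := by rw [Real.norm_of_nonneg hx0]; linarith
  have hseries := hasSum_choose_mul_geometric_of_norm_lt_one k hx1
  calc ∑ r ∈ s, ((r + k).choose k : ℝ) * x ^ (r + k + 1)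
      = x ^ (k + 1) * ∑ r ∈ s, ((r + k).choose k : ℝ) * x ^ r := by
        rw [Finset.mul_sum]
        exact Finset.sum_congr rfl fun r _ => by ring
    _ ≤ x ^ (k + 1) * (1 / (1 - x) ^ (k + 1)) := by
        gcongr
        exact sum_le_hasSum s (fun r _ => by positivity) hseries
    _ = (x / (1 - x)) ^ (k + 1) := by rw [div_pow]; ring
    _ ≤ 1 := pow_le_one₀ (by bound) ((div_le_one (by linarith)).mpr (by linarith))

theorem schur_test {ι : Type*} (s : Finset ι) (F : ι → ι → ℝ) (p w : ι → ℝ)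
    (hF : ∀ i ∈ s, ∀ j ∈ s, 0 ≤ F i j) (hp : ∀ i ∈ s, 0 < p i)
    (hrow : ∀ i ∈ s, ∑ j ∈ s, F i j * p j ≤ p i)
    (hcol : ∀ j ∈ s, ∑ i ∈ s, F i j * p i ≤ p j) :
    ∑ i ∈ s, ∑ j ∈ s, F i j * w i * w j ≤ ∑ i ∈ s, w i ^ 2 := by
  set A : ι → ι → ℝ := fun i j => F i j * p j / p i * w i ^ 2
  set B : ι → ι → ℝ := fun i j => F i j * p i / p j * w j ^ 2
  have hamgm : ∀ i ∈ s, ∀ j ∈ s, F i j * w i * w j ≤ (A i j + B i j) / 2 := by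
    intro i hi j hj
    have hpi := hp i hi
    have hpj := hp j hj
    have h : 2 * (w i * w j) ≤ p j / p i * w i ^ 2 + p i / p j * w j ^ 2 := by
      rw [div_mul_eq_mul_div, div_mul_eq_mul_div, div_add_div _ _ hpi.ne' hpj.ne',
        le_div_iff₀ (by positivity)]
      nlinarith [sq_nonneg (p j * w i - p i * w j)]
    simp only [A, B]
    linear_combination mul_le_mul_of_nonneg_left h (hF i hi j hj) / 2
  have hA : ∀ i ∈ s, ∑ j ∈ s, A i j ≤ w i ^ 2 := fun i hi => by
    simp only [A, ← Finset.sum_mul, ← Finset.sum_div]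
    exact mul_le_of_le_one_left (sq_nonneg _) ((div_le_one (hp i hi)).mpr (hrow i hi))
  have hB : ∀ j ∈ s, ∑ i ∈ s, B i j ≤ w j ^ 2 := fun j hj => by
    simp only [B, ← Finset.sum_mul, ← Finset.sum_div]
    exact mul_le_of_le_one_left (sq_nonneg _) ((div_le_one (hp j hj)).mpr (hcol j hj))
  calc ∑ i ∈ s, ∑ j ∈ s, F i j * w i * w j
      ≤ ∑ i ∈ s, ∑ j ∈ s, (A i j + B i j) / 2 :=
        Finset.sum_le_sum fun i hi => Finset.sum_le_sum fun j hj => hamgm i hi j hj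
    _ = ((∑ i ∈ s, ∑ j ∈ s, A i j) + ∑ j ∈ s, ∑ i ∈ s, B i j) / 2 := by
        simp only [add_div, Finset.sum_add_distrib, Finset.sum_div]
        congr 1
        exact Finset.sum_comm
    _ ≤ ((∑ i ∈ s, w i ^ 2) + ∑ j ∈ s, w j ^ 2) / 2 := by
        linarith [Finset.sum_le_sum hA, Finset.sum_le_sum hB]
    _ = ∑ i ∈ s, w i ^ 2 := by ring

theorem schur_test_of_symm {ι : Type*} (s : Finset ι) (F : ι → ι → ℝ) (p w : ι → ℝ)
    (hF : ∀ i ∈ s, ∀ j ∈ s, 0 ≤ F i j) (hsymm : ∀ i ∈ s, ∀ j ∈ s, F i j = F j i)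
    (hp : ∀ i ∈ s, 0 < p i) (hcol : ∀ j ∈ s, ∑ i ∈ s, F i j * p i ≤ p j) :
    ∑ i ∈ s, ∑ j ∈ s, F i j * w i * w j ≤ ∑ i ∈ s, w i ^ 2 := by
  refine schur_test s F p w hF hp (fun i hi => ?_) hcol
  rw [Finset.sum_congr rfl fun j hj => by rw [hsymm i hi j hj]]
  exact hcol i hi

/-- The entry `(r, s)` of `D^{1/2} K^{di}(g, α) D^{1/2}`, with `r · C(r+s-1, r)` in place of
`(r+s-1)! / ((r-1)! (s-1)!)`. -/
noncomputable def diluteKernel (α g : ℝ) (r s : ℕ) : ℝ :=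
  (√((r : ℝ) * s))⁻¹ * (1 / 2) * r * ((r + s - 1).choose r : ℝ)
    * √((1 + α) ^ r + (1 - α) ^ r) * √((1 + α) ^ s + (1 - α) ^ s) * √g ^ (r + s)

theorem diluteKernel_nonneg (α g : ℝ) (r s : ℕ) : 0 ≤ diluteKernel α g r s := by
  unfold diluteKernel
  positivity

theorem diluteKernel_comm (α g : ℝ) (r s : ℕ) : diluteKernel α g r s = diluteKernel α g s r := by
  have h : (r : ℝ) * ((r + s - 1).choose r : ℝ) = s * ((r + s - 1).choose s : ℝ) := by
    exact_mod_cast Nat.mul_choose_add_sub_one_comm r s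
  unfold diluteKernel
  rw [add_comm s r, mul_comm (s : ℝ) r]
  linear_combination (√((r : ℝ) * s))⁻¹ * (1 / 2) * √((1 + α) ^ r + (1 - α) ^ r)
    * √((1 + α) ^ s + (1 - α) ^ s) * √g ^ (r + s) * h

theorem diluteKernel_mul_inv_sqrt_le {α : ℝ} (hα : 0 ≤ α) (g : ℝ) {r : ℕ} (hr : 0 < r)
    (s : ℕ) :
    diluteKernel α g r s * (√r)⁻¹
      ≤ ((r + s - 1).choose r : ℝ) * √((1 + α) * g) ^ (r + s) * (√s)⁻¹ := by
  have habs : |1 - α| ≤ 1 + α := abs_le.mpr ⟨by linarith, by linarith⟩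
  have hweight : (√((r : ℝ) * s))⁻¹ * r * (√r)⁻¹ = (√s)⁻¹ := by
    have : √(r : ℝ) ≠ 0 := by positivity
    rw [Real.sqrt_mul (Nat.cast_nonneg r)]
    field_simp
    rw [Real.sq_sqrt (Nat.cast_nonneg r)]
  have hsqrt2 : √(2 : ℝ) ^ 2 = 2 := Real.sq_sqrt zero_le_two
  unfold diluteKernel
  calc _ = 1 / 2 * ((r + s - 1).choose r : ℝ) * (√((1 + α) ^ r + (1 - α) ^ r)
          * √((1 + α) ^ s + (1 - α) ^ s)) * √g ^ (r + s) * (√s)⁻¹ := by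
        rw [← hweight]; ring
    _ ≤ 1 / 2 * ((r + s - 1).choose r : ℝ) * ((√2 * √(1 + α) ^ r) * (√2 * √(1 + α) ^ s))
          * √g ^ (r + s) * (√s)⁻¹ := by
        gcongr <;> exact Real.sqrt_pow_add_pow_le habs _
    _ = _ := by
        rw [Real.sqrt_mul (by linarith), mul_pow, pow_add]
        linear_combination 1 / 2 * ((r + s - 1).choose r : ℝ) * √(1 + α) ^ r * √(1 + α) ^ s
          * √g ^ (r + s) * (√s)⁻¹ * hsqrt2

theorem sum_diluteKernel_mul_inv_sqrt_le {α g : ℝ} (hα : 0 ≤ α) (hg : 4 * (1 + α) * g ≤ 1)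
    (n : ℕ) {s : ℕ} (hs : 0 < s) :
    ∑ r ∈ Finset.Icc 1 n, diluteKernel α g r s * (√r)⁻¹ ≤ (√s)⁻¹ := by
  set x := √((1 + α) * g)
  have hx : x ≤ 1 / 2 := Real.sqrt_le_iff.mpr ⟨by norm_num, by linarith⟩
  obtain ⟨k, rfl⟩ : ∃ k, s = k + 1 := ⟨s - 1, by omega⟩
  calc ∑ r ∈ Finset.Icc 1 n, diluteKernel α g r (k + 1) * (√r)⁻¹
      ≤ ∑ r ∈ Finset.Icc 1 n, ((r + k).choose k : ℝ) * x ^ (r + k + 1) * (√(k + 1 : ℕ))⁻¹ := by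
        refine Finset.sum_le_sum fun r hr => ?_
        have hr : 0 < r := (Finset.mem_Icc.mp hr).1
        have h := diluteKernel_mul_inv_sqrt_le hα g hr (k + 1)
        rwa [show r + (k + 1) - 1 = r + k by omega, Nat.choose_symm_add,
          show r + (k + 1) = r + k + 1 by omega] at h
    _ = (∑ r ∈ Finset.Icc 1 n, ((r + k).choose k : ℝ) * x ^ (r + k + 1)) * (√(k + 1 : ℕ))⁻¹ :=
        (Finset.sum_mul ..).symm
    _ ≤ (√(k + 1 : ℕ))⁻¹ :=
        mul_le_of_le_one_left (by positivity) (sum_choose_mul_pow_le_one (by positivity) hx k _)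

theorem stmt_18 (α : ℝ) (hα0 : 0 ≤ α) (g : ℝ)
    (hg1 : g < 1 / (4 * (1 + α))) (n : ℕ) (w : ℕ → ℝ) :
    (∑ r ∈ Finset.Icc 1 n, ∑ s ∈ Finset.Icc 1 n,
        (Real.sqrt ((r : ℝ) * (s : ℝ)))⁻¹ * (1/2) * (r : ℝ)
          * (Nat.choose (r + s - 1) r : ℝ)
          * Real.sqrt ((1 + α) ^ r + (1 - α) ^ r)
          * Real.sqrt ((1 + α) ^ s + (1 - α) ^ s)
          * Real.sqrt g ^ (r + s) * w r * w s)
      ≤ ∑ s ∈ Finset.Icc 1 n, w s ^ 2 := by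
  have hg : 4 * (1 + α) * g ≤ 1 := by
    rw [lt_div_iff₀ (by positivity)] at hg1
    linarith
  have hpos : ∀ r ∈ Finset.Icc 1 n, 0 < r := fun r hr => (Finset.mem_Icc.mp hr).1
  exact schur_test_of_symm (Finset.Icc 1 n) (diluteKernel α g) (fun r => (√(r : ℝ))⁻¹) w
    (fun r _ s _ => diluteKernel_nonneg α g r s) (fun r _ s _ => diluteKernel_comm α g r s)
    (fun r hr => by have := hpos r hr; positivity)
    (fun s hs => sum_diluteKernel_mul_inv_sqrt_le hα0 hg n (hpos s hs))
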